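/- Let 𝔪 > 0 and a ∈ ℝ with a² < 𝔪², and set r₊ := 𝔪 + √(𝔪² − a²) and κ₊ := r₊ − 𝔪. Define P : {(r, θ, σ, ξ, η_θ, η_φ) ∈ ℝ⁶ : sin θ ≠ 0} → ℝ by P(r, θ, σ, ξ, η_θ, η_φ) := −2(−(r²+a²)σ + a η_φ)ξ − (r² − 2𝔪r + a²)ξ² − η_θ² − sin⁻²θ (η_φ − a sin²θ σ)². Then for every θ with sin θ ≠ 0 and every ξ ∈ ℝ, at the point (r₊, θ, 0, ξ, 0, 0) the partial derivatives of P satisfy: ∂P/∂σ = 2(r₊² + a²)ξ, ∂P/∂η_φ = −2aξ, ∂P/∂η_θ = 0, ∂P/∂ξ = 0, ∂P/∂r = −2κ₊ ξ², and ∂P/∂θ = 0. Consequently, at the conormal bundle N*{r = r₊} of the event horizon, the Hamiltonian vector field of ϱ²G equals −2(r₊² + a²)ξ ∂_{t_*} − 2aξ ∂_{φ_*} + 2κ₊ ξ² ∂_ξ. -/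

import Mathlib

/-!
Restricted to any one of the variables `σ, ξ, η_θ, η_φ, r`, the function `P` is a quadratic
polynomial, so its partial derivatives are read off from its coefficients; in `θ` it is constant
once `σ = η_φ = 0`. At the horizon the coefficient `Δ = r² − 2𝔪r + a²` of `ξ²` vanishes, which
kills `∂P/∂ξ`, while `∂Δ/∂r = 2(r₊ − 𝔪) = 2κ₊` survives in `∂P/∂r`.
-/

open Real

/-- `ϱ²G`, i.e. `ϱ² = r² + a²cos²θ` times the dual metric function of the Kerr
metric, evaluated on the covector `−σ dt_* + ξ dr + η_θ dθ + η_φ dφ_*` in the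
coordinates `(t_*, r, θ, φ_*)`. -/
noncomputable def kerrP (𝔪 a r θ σ ξ ηθ ηφ : ℝ) : ℝ :=
  -(2 * (-((r ^ 2 + a ^ 2) * σ) + a * ηφ) * ξ)
    - (r ^ 2 - 2 * 𝔪 * r + a ^ 2) * ξ ^ 2 - ηθ ^ 2
    - (Real.sin θ ^ 2)⁻¹ * (ηφ - a * Real.sin θ ^ 2 * σ) ^ 2

theorem hasDerivAt_quadratic {𝕜 : Type*} [NontriviallyNormedField 𝕜] (a b c x : 𝕜) :
    HasDerivAt (fun x => a * x ^ 2 + b * x + c) (2 * a * x + b) x := by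
  have hsq : HasDerivAt (fun x => a * x ^ 2) (2 * a * x) x := by
    simpa [mul_comm, mul_left_comm] using (hasDerivAt_pow 2 x).const_mul a
  simpa using (hsq.add ((hasDerivAt_id x).const_mul b)).add_const c

theorem horizon_radius_sq_sub_two_mul_add_sq {𝔪 a : ℝ} (ha : a ^ 2 ≤ 𝔪 ^ 2) :
    (𝔪 + √(𝔪 ^ 2 - a ^ 2)) ^ 2 - 2 * 𝔪 * (𝔪 + √(𝔪 ^ 2 - a ^ 2)) + a ^ 2 = 0 := by
  have hsqrt : √(𝔪 ^ 2 - a ^ 2) ^ 2 = 𝔪 ^ 2 - a ^ 2 := sq_sqrt (sub_nonneg.2 ha)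
  linear_combination hsqrt

section PartialDerivatives

variable (𝔪 a r θ σ ξ ηθ ηφ : ℝ)

theorem hasDerivAt_kerrP_sigma :
    HasDerivAt (fun σ => kerrP 𝔪 a r θ σ ξ ηθ 0)
      (2 * (r ^ 2 + a ^ 2) * ξ - 2 * a ^ 2 * sin θ ^ 2 * σ) σ := by
  refine (hasDerivAt_quadratic (-(a ^ 2 * sin θ ^ 2)) (2 * (r ^ 2 + a ^ 2) * ξ)
    (-((r ^ 2 - 2 * 𝔪 * r + a ^ 2) * ξ ^ 2) - ηθ ^ 2) σ |>.congr_deriv (by ring))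
    |>.congr_of_eventuallyEq (.of_forall fun σ => ?_)
  unfold kerrP
  -- `s⁻¹ * s * s = s` holds also at `s = sin θ ^ 2 = 0`
  linear_combination (-(a ^ 2 * σ ^ 2)) * inv_mul_mul_self (sin θ ^ 2)

theorem hasDerivAt_kerrP_etaPhi :
    HasDerivAt (fun ηφ => kerrP 𝔪 a r θ 0 ξ ηθ ηφ)
      (-(2 * a * ξ) - 2 * (sin θ ^ 2)⁻¹ * ηφ) ηφ := by
  refine (hasDerivAt_quadratic (-(sin θ ^ 2)⁻¹) (-(2 * a * ξ))
    (-((r ^ 2 - 2 * 𝔪 * r + a ^ 2) * ξ ^ 2) - ηθ ^ 2) ηφ |>.congr_deriv (by ring))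
    |>.congr_of_eventuallyEq (.of_forall fun ηφ => ?_)
  unfold kerrP
  ring

theorem hasDerivAt_kerrP_etaTheta :
    HasDerivAt (fun ηθ => kerrP 𝔪 a r θ σ ξ ηθ ηφ) (-(2 * ηθ)) ηθ := by
  refine (hasDerivAt_quadratic (-1) 0 (kerrP 𝔪 a r θ σ ξ 0 ηφ) ηθ |>.congr_deriv (by ring))
    |>.congr_of_eventuallyEq (.of_forall fun ηθ => ?_)
  unfold kerrP
  ring

theorem hasDerivAt_kerrP_xi :
    HasDerivAt (fun ξ => kerrP 𝔪 a r θ σ ξ ηθ ηφ)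
      (-(2 * (-((r ^ 2 + a ^ 2) * σ) + a * ηφ)) - 2 * (r ^ 2 - 2 * 𝔪 * r + a ^ 2) * ξ) ξ := by
  refine (hasDerivAt_quadratic (-(r ^ 2 - 2 * 𝔪 * r + a ^ 2))
    (-(2 * (-((r ^ 2 + a ^ 2) * σ) + a * ηφ))) (kerrP 𝔪 a r θ σ 0 ηθ ηφ) ξ
    |>.congr_deriv (by ring)) |>.congr_of_eventuallyEq (.of_forall fun ξ => ?_)
  unfold kerrP
  ring

theorem hasDerivAt_kerrP_r :
    HasDerivAt (fun r => kerrP 𝔪 a r θ σ ξ ηθ ηφ) (4 * r * σ * ξ - 2 * (r - 𝔪) * ξ ^ 2) r := by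
  refine (hasDerivAt_quadratic (2 * σ * ξ - ξ ^ 2) (2 * 𝔪 * ξ ^ 2) (kerrP 𝔪 a 0 θ σ ξ ηθ ηφ) r
    |>.congr_deriv (by ring)) |>.congr_of_eventuallyEq (.of_forall fun r => ?_)
  unfold kerrP
  ring

theorem kerrP_sigma_zero_etaPhi_zero :
    kerrP 𝔪 a r θ 0 ξ ηθ 0 = -((r ^ 2 - 2 * 𝔪 * r + a ^ 2) * ξ ^ 2) - ηθ ^ 2 := by
  simp [kerrP]

end PartialDerivatives

theorem kerrP_derivs_at_horizon_general (𝔪 a : ℝ) (ha : a ^ 2 < 𝔪 ^ 2)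
    (θ ξ : ℝ) :
    let rplus : ℝ := 𝔪 + Real.sqrt (𝔪 ^ 2 - a ^ 2)
    let kplus : ℝ := rplus - 𝔪
    deriv (fun σ => kerrP 𝔪 a rplus θ σ ξ 0 0) 0 = 2 * (rplus ^ 2 + a ^ 2) * ξ ∧
    deriv (fun ηφ => kerrP 𝔪 a rplus θ 0 ξ 0 ηφ) 0 = -(2 * a * ξ) ∧
    deriv (fun ηθ => kerrP 𝔪 a rplus θ 0 ξ ηθ 0) 0 = 0 ∧
    deriv (fun ξ' => kerrP 𝔪 a rplus θ 0 ξ' 0 0) ξ = 0 ∧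
    deriv (fun r => kerrP 𝔪 a r θ 0 ξ 0 0) rplus = -(2 * kplus * ξ ^ 2) ∧
    deriv (fun θ' => kerrP 𝔪 a rplus θ' 0 ξ 0 0) θ = 0 := by
  intro rplus kplus
  have hΔ : rplus ^ 2 - 2 * 𝔪 * rplus + a ^ 2 = 0 := horizon_radius_sq_sub_two_mul_add_sq ha.le
  refine ⟨?_, ?_, ?_, ?_, ?_, ?_⟩
  · simpa using (hasDerivAt_kerrP_sigma 𝔪 a rplus θ 0 ξ 0).deriv
  · simpa using (hasDerivAt_kerrP_etaPhi 𝔪 a rplus θ ξ 0 0).deriv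
  · simpa using (hasDerivAt_kerrP_etaTheta 𝔪 a rplus θ 0 ξ 0 0).deriv
  · rw [(hasDerivAt_kerrP_xi 𝔪 a rplus θ 0 ξ 0 0).deriv, hΔ]
    ring
  · rw [(hasDerivAt_kerrP_r 𝔪 a rplus θ 0 ξ 0 0).deriv]
    ring
  · simp only [kerrP_sigma_zero_etaPhi_zero, deriv_const]

/-- At the conormal bundle of the event horizon `{r = rplus}` (i.e. at points
`(rplus, θ, 0, ξ, 0, 0)`), the partial derivatives of `P = ϱ²G` are
`∂P/∂σ = 2(rplus²+a²)ξ`, `∂P/∂η_φ = −2aξ`, `∂P/∂η_θ = 0`, `∂P/∂ξ = 0`,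
`∂P/∂r = −2kplusξ²`, and `∂P/∂θ = 0`; consequently the Hamiltonian vector field of
`ϱ²G` there equals `−2(rplus²+a²)ξ ∂_{t_*} − 2aξ ∂_{φ_*} + 2kplusξ² ∂_ξ`. -/
theorem kerrP_derivs_at_horizon (𝔪 a : ℝ) (h𝔪 : 0 < 𝔪) (ha : a ^ 2 < 𝔪 ^ 2)
    (θ ξ : ℝ) (hθ : Real.sin θ ≠ 0) :
    let rplus : ℝ := 𝔪 + Real.sqrt (𝔪 ^ 2 - a ^ 2)
    let kplus : ℝ := rplus - 𝔪
    deriv (fun σ => kerrP 𝔪 a rplus θ σ ξ 0 0) 0 = 2 * (rplus ^ 2 + a ^ 2) * ξ ∧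
    deriv (fun ηφ => kerrP 𝔪 a rplus θ 0 ξ 0 ηφ) 0 = -(2 * a * ξ) ∧
    deriv (fun ηθ => kerrP 𝔪 a rplus θ 0 ξ ηθ 0) 0 = 0 ∧
    deriv (fun ξ' => kerrP 𝔪 a rplus θ 0 ξ' 0 0) ξ = 0 ∧
    deriv (fun r => kerrP 𝔪 a r θ 0 ξ 0 0) rplus = -(2 * kplus * ξ ^ 2) ∧
    deriv (fun θ' => kerrP 𝔪 a rplus θ' 0 ξ 0 0) θ = 0 :=
  kerrP_derivs_at_horizon_general 𝔪 a ha θ ξ
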